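/- arXiv:2603.03664 — 7 statements merged into one kernel-verified Lean document; each statement's English description precedes it below -/
import Mathlib

section
/- Value closeness under an approximate model: consider a finite-horizon process of length H over finite common-information sets C_h, with true per-step expected rewards r_h(c, γ) ∈ [−1, 1] and true increment kernels P_h(z | c, γ), and an approximate model with rewards r̂_h(ĉ, γ) and kernels P̂_h(z | ĉ, γ) where ĉ = Compress_h(c). Suppose for every strategy and step h, the expected (over trajectories of the true process) reward error is at most ε_r and the expected ℓ₁ error of the increment kernels is at most ε_z. Then for any strategy g and any h ∈ [H], the expectation over true trajectories of |V_h^{g,true}(c_h) − V_h^{g,model}(c_h)| is at most (H − h + 1)ε_r + ((H − h + 1)(H − h)/2)ε_z, where V^{g,true} and V^{g,model} are the value functions of g computed under the true kernels/rewards and the model kernels/rewards respectively, with values bounded in absolute value by the remaining horizon. -/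
/-!
Along true trajectories the value gap obeys a one-step recursion: the gap at step `h` is at most
the reward error, plus the kernel error weighted by a bound `H - h` on the next model value, plus
the gap at step `h + 1` transported by the true kernel. Transporting by the true kernel is exactly
how the occupancy measure evolves, so after taking expectations the last term is the expected gap
at step `h + 1`. Summing the recursion from `h` to `H` gives the arithmetic series.
-/

open Finset

section Recursions

variable {C Z : Type*} [Fintype Z]

theorem abs_le_of_backward_recursion (H : ℕ) (ext : C → Z → C) (a : ℕ → C → ℝ)
    (Q : ℕ → C → Z → ℝ) (V : ℕ → C → ℝ) (ha : ∀ h c, |a h c| ≤ 1)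
    (hQ0 : ∀ h c z, 0 ≤ Q h c z) (hQ1 : ∀ h c, ∑ z, Q h c z = 1)
    (hend : ∀ c, V (H + 1) c = 0)
    (hV : ∀ h c, 1 ≤ h → h ≤ H → V h c = a h c + ∑ z, Q h c z * V (h + 1) (ext c z))
    (h : ℕ) (h1 : 1 ≤ h) (hH : h ≤ H + 1) (c : C) :
    |V h c| ≤ (H : ℝ) + 1 - h := by
  revert c
  refine Nat.decreasingInduction' (fun k hk hhk ih c => ?_) hH (by simp [hend])
  have hk1 : 1 ≤ k := h1.trans hhk
  calc |V k c| = |a k c + ∑ z, Q k c z * V (k + 1) (ext c z)| := by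
        rw [hV k c hk1 (by omega)]
    _ ≤ 1 + ∑ z, Q k c z * ((H : ℝ) + 1 - (k + 1 : ℕ)) := by
        refine (abs_add_le _ _).trans (add_le_add (ha k c) ?_)
        refine (abs_sum_le_sum_abs _ _).trans (sum_le_sum fun z _ => ?_)
        rw [abs_mul, abs_of_nonneg (hQ0 k c z)]
        exact mul_le_mul_of_nonneg_left (ih _) (hQ0 k c z)
    _ = (H : ℝ) + 1 - k := by
        rw [← sum_mul, hQ1]
        push_cast
        ring

theorem le_arithmetic_series_of_backward_step (H : ℕ) (D : ℕ → ℝ) (εr εz : ℝ)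
    (hend : D (H + 1) = 0)
    (hstep : ∀ h, 1 ≤ h → h ≤ H → D h ≤ εr + ((H : ℝ) - h) * εz + D (h + 1))
    (h : ℕ) (h1 : 1 ≤ h) (hH : h ≤ H + 1) :
    D h ≤ ((H : ℝ) - h + 1) * εr + (((H : ℝ) - h + 1) * ((H : ℝ) - h) / 2) * εz := by
  refine Nat.decreasingInduction' (fun k hk hhk ih => ?_) hH (by simp [hend])
  calc D k ≤ εr + ((H : ℝ) - k) * εz + D (k + 1) := hstep k (h1.trans hhk) (by omega)
    _ ≤ εr + ((H : ℝ) - k) * εz + (((H : ℝ) - (k + 1 : ℕ) + 1) * εr +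
          (((H : ℝ) - (k + 1 : ℕ) + 1) * ((H : ℝ) - (k + 1 : ℕ)) / 2) * εz) := by gcongr
    _ = ((H : ℝ) - k + 1) * εr + (((H : ℝ) - k + 1) * ((H : ℝ) - k) / 2) * εz := by
        push_cast
        ring

end Recursions

section Occupancy

variable {C Z : Type*} [Fintype C] [Fintype Z] [DecidableEq C]

theorem occupancy_nonneg (ext : C → Z → C) (K : ℕ → C → Z → ℝ) (d : ℕ → C → ℝ)
    (hK : ∀ h c z, 0 ≤ K h c z) (hd1 : ∀ c, 0 ≤ d 1 c)
    (hdrec : ∀ h c', d (h + 1) c' =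
      ∑ c, ∑ z, if ext c z = c' then d h c * K h c z else 0)
    (h : ℕ) (h1 : 1 ≤ h) (c : C) : 0 ≤ d h c := by
  induction h, h1 using Nat.le_induction generalizing c with
  | base => exact hd1 c
  | succ k _ ih =>
    rw [hdrec]
    refine sum_nonneg fun c' _ => sum_nonneg fun z _ => ?_
    split_ifs
    · exact mul_nonneg (ih c') (hK k c' z)
    · exact le_rfl

theorem sum_mul_eq_sum_mul_sum_of_flow (ext : C → Z → C) (K : C → Z → ℝ) (μ μ' : C → ℝ)
    (hμ' : ∀ c', μ' c' = ∑ c, ∑ z, if ext c z = c' then μ c * K c z else 0)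
    (f : C → ℝ) :
    ∑ c', μ' c' * f c' = ∑ c, μ c * ∑ z, K c z * f (ext c z) := by
  simp_rw [hμ', sum_mul, ite_mul, zero_mul, mul_sum]
  rw [sum_comm]
  refine sum_congr rfl fun c _ => ?_
  rw [sum_comm]
  refine sum_congr rfl fun z _ => ?_
  rw [sum_ite_eq]
  simp [mul_assoc]

end Occupancy

section Gap

variable {C Z : Type*} [Fintype C] [Fintype Z]

theorem abs_sum_mul_sub_sum_mul_le (p q f g : Z → ℝ) (B : ℝ) (hp : ∀ z, 0 ≤ p z)
    (hg : ∀ z, |g z| ≤ B) :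
    |∑ z, p z * f z - ∑ z, q z * g z| ≤
      B * ∑ z, |p z - q z| + ∑ z, p z * |f z - g z| := by
  rw [← sum_sub_distrib, mul_sum, ← sum_add_distrib]
  refine (abs_sum_le_sum_abs _ _).trans (sum_le_sum fun z _ => ?_)
  calc |p z * f z - q z * g z| = |p z * (f z - g z) + (p z - q z) * g z| := by ring_nf
    _ ≤ |p z * (f z - g z)| + |(p z - q z) * g z| := abs_add_le _ _
    _ ≤ B * |p z - q z| + p z * |f z - g z| := by
        rw [abs_mul, abs_mul, abs_of_nonneg (hp z), add_comm, mul_comm B]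
        gcongr
        exact hg z

theorem sum_mul_abs_sub_le_of_one_step [DecidableEq C] (ext : C → Z → C) (μ μ' : C → ℝ)
    (p q : C → Z → ℝ) (a b V W V' W' : C → ℝ) (B : ℝ) (hμ : ∀ c, 0 ≤ μ c)
    (hμ' : ∀ c', μ' c' = ∑ c, ∑ z, if ext c z = c' then μ c * p c z else 0)
    (hp : ∀ c z, 0 ≤ p c z) (hW' : ∀ c, |W' c| ≤ B)
    (hV : ∀ c, V c = a c + ∑ z, p c z * V' (ext c z))
    (hW : ∀ c, W c = b c + ∑ z, q c z * W' (ext c z)) :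
    ∑ c, μ c * |V c - W c| ≤
      ∑ c, μ c * |a c - b c| + B * ∑ c, μ c * ∑ z, |p c z - q c z| +
        ∑ c', μ' c' * |V' c' - W' c'| := by
  have pointwise : ∀ c, |V c - W c| ≤
      |a c - b c| + B * ∑ z, |p c z - q c z| + ∑ z, p c z * |V' (ext c z) - W' (ext c z)| := by
    intro c
    rw [hV, hW, add_sub_add_comm, add_assoc]
    exact (abs_add_le _ _).trans (add_le_add le_rfl
      (abs_sum_mul_sub_sum_mul_le _ _ _ _ B (hp c) fun z => hW' _))
  rw [sum_mul_eq_sum_mul_sum_of_flow ext p μ μ' hμ', mul_sum, ← sum_add_distrib,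
    ← sum_add_distrib]
  refine sum_le_sum fun c _ => ?_
  calc μ c * |V c - W c|
      ≤ μ c * (|a c - b c| + B * ∑ z, |p c z - q c z| +
          ∑ z, p c z * |V' (ext c z) - W' (ext c z)|) :=
        mul_le_mul_of_nonneg_left (pointwise c) (hμ c)
    _ = _ := by ring

end Gap

theorem stmt7_general {C Z Γ Chat : Type*} [Fintype C] [Fintype Z] [DecidableEq C]
    (H : ℕ)
    (ext : C → Z → C) (c₀ : C)
    (r : ℕ → C → Γ → ℝ) (P : ℕ → C → Γ → Z → ℝ)
    (compress : ℕ → C → Chat)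
    (rhat : ℕ → Chat → Γ → ℝ) (Phat : ℕ → Chat → Γ → Z → ℝ)
    (hrhat : ∀ h ch γ, |rhat h ch γ| ≤ 1)
    (hP0 : ∀ h c γ z, 0 ≤ P h c γ z)
    (hPhat0 : ∀ h ch γ z, 0 ≤ Phat h ch γ z) (hPhat1 : ∀ h ch γ, ∑ z, Phat h ch γ z = 1)
    (εr εz : ℝ)
    -- occupancy measure over common information of the true process under a strategy
    (d : (ℕ → C → Γ) → ℕ → C → ℝ)
    (hd1 : ∀ g c, d g 1 c = if c = c₀ then 1 else 0)
    (hdrec : ∀ g h c', d g (h + 1) c' =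
        ∑ c, ∑ z, (if ext c z = c' then d g h c * P h c (g h c) z else 0))
    -- per-step expected approximation errors, for every strategy
    (herr_r : ∀ g h, 1 ≤ h → h ≤ H →
        ∑ c, d g h c * |r h c (g h c) - rhat h (compress h c) (g h c)| ≤ εr)
    (herr_z : ∀ g h, 1 ≤ h → h ≤ H →
        ∑ c, d g h c *
          (∑ z, |P h c (g h c) z - Phat h (compress h c) (g h c) z|) ≤ εz)
    -- true and model value functions of a strategy, defined by backward recursion
    (Vtrue Vmodel : (ℕ → C → Γ) → ℕ → C → ℝ)
    (hVtrue_end : ∀ g c, Vtrue g (H + 1) c = 0)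
    (hVmodel_end : ∀ g c, Vmodel g (H + 1) c = 0)
    (hVtrue : ∀ g h c, 1 ≤ h → h ≤ H →
        Vtrue g h c = r h c (g h c) + ∑ z, P h c (g h c) z * Vtrue g (h + 1) (ext c z))
    (hVmodel : ∀ g h c, 1 ≤ h → h ≤ H →
        Vmodel g h c = rhat h (compress h c) (g h c) +
          ∑ z, Phat h (compress h c) (g h c) z * Vmodel g (h + 1) (ext c z)) :
    ∀ (g : ℕ → C → Γ) (h : ℕ), 1 ≤ h → h ≤ H →
      ∑ c, d g h c * |Vtrue g h c - Vmodel g h c| ≤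
        ((H : ℝ) - (h : ℝ) + 1) * εr +
          (((H : ℝ) - (h : ℝ) + 1) * ((H : ℝ) - (h : ℝ)) / 2) * εz := by
  intro g h h1 hH
  have hd_nonneg := occupancy_nonneg ext (fun h c => P h c (g h c)) (d g)
    (fun h c z => hP0 h c _ z) (fun c => by rw [hd1]; split_ifs <;> norm_num) (hdrec g)
  have hVmodel_le := abs_le_of_backward_recursion H ext
    (fun h c => rhat h (compress h c) (g h c)) (fun h c => Phat h (compress h c) (g h c))
    (Vmodel g) (fun h c => hrhat h _ _) (fun h c z => hPhat0 h _ _ z) (fun h c => hPhat1 h _ _)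
    (hVmodel_end g) (hVmodel g)
  refine le_arithmetic_series_of_backward_step H
    (fun k => ∑ c, d g k c * |Vtrue g k c - Vmodel g k c|) εr εz
    (by simp [hVtrue_end, hVmodel_end])
    (fun k hk1 hkH => ?_) h h1 (by omega)
  have hstep := sum_mul_abs_sub_le_of_one_step ext (d g k) (d g (k + 1))
    (fun c => P k c (g k c)) (fun c => Phat k (compress k c) (g k c)) _ _ _ _ _ _
    ((H : ℝ) + 1 - (k + 1 : ℕ)) (hd_nonneg k hk1) (hdrec g k) (fun c z => hP0 k c _ z)
    (hVmodel_le (k + 1) (by omega) (by omega)) (fun c => hVtrue g k c hk1 hkH)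
    (fun c => hVmodel g k c hk1 hkH)
  have hHk : (H : ℝ) + 1 - (k + 1 : ℕ) = (H : ℝ) - k := by push_cast; ring
  rw [hHk] at hstep
  have hHk0 : (0 : ℝ) ≤ (H : ℝ) - k := by rw [sub_nonneg]; exact_mod_cast hkH
  linarith [herr_r g k hk1 hkH, mul_le_mul_of_nonneg_left (herr_z g k hk1 hkH) hHk0]

/-- Value closeness under an (ε_r, ε_z)-approximate common-information model: if for
every strategy and step the expected (over true trajectories) reward error is at most
ε_r and the expected ℓ₁ increment-kernel error is at most ε_z, then the expected gap
between the true and model value functions of any strategy at step h is at most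
(H−h+1)ε_r + ((H−h+1)(H−h)/2)ε_z. -/
theorem stmt7 {C Z Γ Chat : Type*} [Fintype C] [Fintype Z] [Fintype Γ] [DecidableEq C]
    (H : ℕ) (hH : 1 ≤ H)
    (ext : C → Z → C) (c₀ : C)
    (r : ℕ → C → Γ → ℝ) (P : ℕ → C → Γ → Z → ℝ)
    (compress : ℕ → C → Chat)
    (rhat : ℕ → Chat → Γ → ℝ) (Phat : ℕ → Chat → Γ → Z → ℝ)
    (hr : ∀ h c γ, |r h c γ| ≤ 1) (hrhat : ∀ h ch γ, |rhat h ch γ| ≤ 1)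
    (hP0 : ∀ h c γ z, 0 ≤ P h c γ z) (hP1 : ∀ h c γ, ∑ z, P h c γ z = 1)
    (hPhat0 : ∀ h ch γ z, 0 ≤ Phat h ch γ z) (hPhat1 : ∀ h ch γ, ∑ z, Phat h ch γ z = 1)
    (εr εz : ℝ)
    -- occupancy measure over common information of the true process under a strategy
    (d : (ℕ → C → Γ) → ℕ → C → ℝ)
    (hd1 : ∀ g c, d g 1 c = if c = c₀ then 1 else 0)
    (hdrec : ∀ g h c', d g (h + 1) c' =
        ∑ c, ∑ z, (if ext c z = c' then d g h c * P h c (g h c) z else 0))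
    -- per-step expected approximation errors, for every strategy
    (herr_r : ∀ g h, 1 ≤ h → h ≤ H →
        ∑ c, d g h c * |r h c (g h c) - rhat h (compress h c) (g h c)| ≤ εr)
    (herr_z : ∀ g h, 1 ≤ h → h ≤ H →
        ∑ c, d g h c *
          (∑ z, |P h c (g h c) z - Phat h (compress h c) (g h c) z|) ≤ εz)
    -- true and model value functions of a strategy, defined by backward recursion
    (Vtrue Vmodel : (ℕ → C → Γ) → ℕ → C → ℝ)
    (hVtrue_end : ∀ g c, Vtrue g (H + 1) c = 0)
    (hVmodel_end : ∀ g c, Vmodel g (H + 1) c = 0)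
    (hVtrue : ∀ g h c, 1 ≤ h → h ≤ H →
        Vtrue g h c = r h c (g h c) + ∑ z, P h c (g h c) z * Vtrue g (h + 1) (ext c z))
    (hVmodel : ∀ g h c, 1 ≤ h → h ≤ H →
        Vmodel g h c = rhat h (compress h c) (g h c) +
          ∑ z, Phat h (compress h c) (g h c) z * Vmodel g (h + 1) (ext c z)) :
    ∀ (g : ℕ → C → Γ) (h : ℕ), 1 ≤ h → h ≤ H →
      ∑ c, d g h c * |Vtrue g h c - Vmodel g h c| ≤
        ((H : ℝ) - (h : ℝ) + 1) * εr +
          (((H : ℝ) - (h : ℝ) + 1) * ((H : ℝ) - (h : ℝ)) / 2) * εz :=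
  stmt7_general H ext c₀ r P compress rhat Phat hrhat hP0 hPhat0 hPhat1 εr εz d hd1 hdrec herr_r
    herr_z Vtrue Vmodel hVtrue_end hVmodel_end hVtrue hVmodel
end

section
/- Suboptimality of the model-optimal strategy in the true system: under the hypotheses of the value-closeness lemma (per-step expected reward error ≤ ε_r and per-step expected increment-kernel ℓ₁ error ≤ ε_z for every strategy) and letting ĝ* be the strategy produced by backward induction in the approximate model M, for every strategy g one has J_true(g) − J_true(ĝ*) ≤ 2H·ε_r + H²·ε_z, where J_true(g) = V_1^{g,true}(∅). Hence ĝ* is (2Hε_r + H²ε_z)-optimal for the true problem. -/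
/-!
Along the occupancy measure of the true process, the one-step decomposition
`V - W = (r - r̂) + (p - q)·W' + p·(V' - W')`, with `|W'|` bounded by the remaining horizon,
shows that the expected gap between the true and model values of any strategy grows by at most
`εr + (H - h) εz` per step, hence is at most `H εr + H (H - 1)/2 εz` at the start. By the
comparison principle for backward recursions, the greedy strategy `ĝ*` dominates every strategy
in the model, so `J(g) - J(ĝ*)` is at most twice that gap.
-/

open Finset

namespace FiniteHorizon

theorem backward_induction {H : ℕ} {P : ℕ → Prop} (hend : P (H + 1))
    (hstep : ∀ h, 1 ≤ h → h ≤ H → P (h + 1) → P h) :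
    ∀ h, 1 ≤ h → h ≤ H + 1 → P h := fun _ h1 hh =>
  Nat.decreasingInduction' (P := P)
    (fun k hk hhk ih => hstep k (h1.trans hhk) (Nat.lt_succ_iff.mp hk) ih) hh hend

theorem abs_add_sum_mul_sub_add_sum_mul_le {Z : Type*} [Fintype Z] (a b B : ℝ)
    (p q v w : Z → ℝ) (hp : ∀ z, 0 ≤ p z) (hw : ∀ z, |w z| ≤ B) :
    |(a + ∑ z, p z * v z) - (b + ∑ z, q z * w z)| ≤
      |a - b| + (∑ z, |p z - q z|) * B + ∑ z, p z * |v z - w z| := by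
  have hsplit : (a + ∑ z, p z * v z) - (b + ∑ z, q z * w z) =
      (a - b) + ∑ z, (p z - q z) * w z + ∑ z, p z * (v z - w z) := by
    simp only [mul_sub, sub_mul, sum_sub_distrib]
    ring
  have hkernel : |∑ z, (p z - q z) * w z| ≤ (∑ z, |p z - q z|) * B := by
    rw [sum_mul]
    refine (abs_sum_le_sum_abs _ _).trans (sum_le_sum fun z _ => ?_)
    rw [abs_mul]
    exact mul_le_mul_of_nonneg_left (hw z) (abs_nonneg _)
  have hnext : |∑ z, p z * (v z - w z)| ≤ ∑ z, p z * |v z - w z| := by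
    refine (abs_sum_le_sum_abs _ _).trans (le_of_eq (sum_congr rfl fun z _ => ?_))
    rw [abs_mul, abs_of_nonneg (hp z)]
  rw [hsplit]
  calc _ ≤ |a - b| + |∑ z, (p z - q z) * w z| + |∑ z, p z * (v z - w z)| :=
        (abs_add_le _ _).trans (by gcongr; exact abs_add_le _ _)
    _ ≤ _ := by gcongr

section

variable {C Z : Type*} [Fintype Z]

def IsValueFunction (H : ℕ) (ext : C → Z → C) (r : ℕ → C → ℝ) (p : ℕ → C → Z → ℝ)
    (V : ℕ → C → ℝ) : Prop :=
  (∀ c, V (H + 1) c = 0) ∧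
    ∀ h c, 1 ≤ h → h ≤ H → V h c = r h c + ∑ z, p h c z * V (h + 1) (ext c z)

def IsOccupancy [Fintype C] [DecidableEq C] (ext : C → Z → C) (c₀ : C) (p : ℕ → C → Z → ℝ)
    (d : ℕ → C → ℝ) : Prop :=
  (∀ c, d 1 c = if c = c₀ then 1 else 0) ∧
    ∀ h c', d (h + 1) c' = ∑ c, ∑ z, if ext c z = c' then d h c * p h c z else 0

theorem le_of_subsolution_of_supersolution {H : ℕ} {ext : C → Z → C} {r : ℕ → C → ℝ}
    {p : ℕ → C → Z → ℝ} {V W : ℕ → C → ℝ} (hp : ∀ h c z, 0 ≤ p h c z)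
    (hend : ∀ c, V (H + 1) c ≤ W (H + 1) c)
    (hV : ∀ h c, 1 ≤ h → h ≤ H → V h c ≤ r h c + ∑ z, p h c z * V (h + 1) (ext c z))
    (hW : ∀ h c, 1 ≤ h → h ≤ H → r h c + ∑ z, p h c z * W (h + 1) (ext c z) ≤ W h c) :
    ∀ h, 1 ≤ h → h ≤ H + 1 → ∀ c, V h c ≤ W h c := by
  refine backward_induction hend fun h h1 hH ih c => ?_
  calc V h c ≤ r h c + ∑ z, p h c z * V (h + 1) (ext c z) := hV h c h1 hH
    _ ≤ r h c + ∑ z, p h c z * W (h + 1) (ext c z) := by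
        gcongr with z
        exacts [hp h c z, ih _]
    _ ≤ W h c := hW h c h1 hH

theorem IsValueFunction.abs_le {H : ℕ} {ext : C → Z → C} {r : ℕ → C → ℝ}
    {p : ℕ → C → Z → ℝ} {V : ℕ → C → ℝ} (hV : IsValueFunction H ext r p V)
    (hr : ∀ h c, |r h c| ≤ 1) (hp0 : ∀ h c z, 0 ≤ p h c z) (hp1 : ∀ h c, ∑ z, p h c z = 1) :
    ∀ h, 1 ≤ h → h ≤ H + 1 → ∀ c, |V h c| ≤ (H : ℝ) + 1 - h := by
  refine backward_induction (fun c => by simp [hV.1]) fun h h1 hH ih c => ?_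
  have hnext : |∑ z, p h c z * V (h + 1) (ext c z)| ≤ (H : ℝ) - h := by
    calc |∑ z, p h c z * V (h + 1) (ext c z)| ≤ ∑ z, p h c z * |V (h + 1) (ext c z)| := by
          refine (abs_sum_le_sum_abs _ _).trans (le_of_eq (sum_congr rfl fun z _ => ?_))
          rw [abs_mul, abs_of_nonneg (hp0 h c z)]
      _ ≤ ∑ z, p h c z * ((H : ℝ) - h) := by
          gcongr with z
          · exact hp0 h c z
          · simpa using ih (ext c z)
      _ = (H : ℝ) - h := by rw [← sum_mul, hp1, one_mul]
  rw [hV.2 h c h1 hH]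
  linarith [abs_add_le (r h c) (∑ z, p h c z * V (h + 1) (ext c z)), hr h c]

theorem IsValueFunction.le_of_argmax {Γ Chat : Type*} {H : ℕ} {ext : C → Z → C}
    {compress : ℕ → C → Chat} {φhat : ℕ → Chat → Z → Chat}
    (hcompat : ∀ h c z, compress (h + 1) (ext c z) = φhat h (compress h c) z)
    {rhat : ℕ → Chat → Γ → ℝ} {Phat : ℕ → Chat → Γ → Z → ℝ}
    (hPhat0 : ∀ h ch γ z, 0 ≤ Phat h ch γ z)
    {Qstar : ℕ → Chat → Γ → ℝ} {Vstar : ℕ → Chat → ℝ} {gstar : ℕ → Chat → Γ}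
    (hVend : ∀ ch, Vstar (H + 1) ch = 0)
    (hQ : ∀ h ch γ, 1 ≤ h → h ≤ H →
        Qstar h ch γ = rhat h ch γ + ∑ z, Phat h ch γ z * Vstar (h + 1) (φhat h ch z))
    (hargmax : ∀ h ch γ, 1 ≤ h → h ≤ H → Qstar h ch γ ≤ Qstar h ch (gstar h ch))
    (hV : ∀ h ch, 1 ≤ h → h ≤ H → Vstar h ch = Qstar h ch (gstar h ch))
    {g : ℕ → C → Γ} {Vg Vstar' : ℕ → C → ℝ}
    (hVg : IsValueFunction H ext (fun h c => rhat h (compress h c) (g h c))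
      (fun h c z => Phat h (compress h c) (g h c) z) Vg)
    (hVstar' : IsValueFunction H ext (fun h c => rhat h (compress h c) (gstar h (compress h c)))
      (fun h c z => Phat h (compress h c) (gstar h (compress h c)) z) Vstar') :
    ∀ h, 1 ≤ h → h ≤ H + 1 → ∀ c, Vg h c ≤ Vstar' h c := by
  -- `Vstar ∘ compress` is a supersolution for `g` and a subsolution for the greedy strategy.
  have hQlift : ∀ h c γ, 1 ≤ h → h ≤ H → rhat h (compress h c) γ +
      ∑ z, Phat h (compress h c) γ z * Vstar (h + 1) (compress (h + 1) (ext c z)) =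
        Qstar h (compress h c) γ := fun h c γ h1 hH => by
    rw [hQ h _ γ h1 hH]
    simp only [hcompat]
  intro h h1 hH c
  calc Vg h c ≤ Vstar h (compress h c) := by
        refine le_of_subsolution_of_supersolution (W := fun h c => Vstar h (compress h c))
          (fun h c => hPhat0 h _ (g h c))
          (by simp [hVg.1, hVend]) (fun h c h1 hH => (hVg.2 h c h1 hH).le)
          (fun h c h1 hH => ?_) h h1 hH c
        rw [hQlift h c _ h1 hH, hV h _ h1 hH]
        exact hargmax h _ _ h1 hH
    _ ≤ Vstar' h c := by
        refine le_of_subsolution_of_supersolution (V := fun h c => Vstar h (compress h c))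
          (fun h c => hPhat0 h _ _)
          (by simp [hVstar'.1, hVend]) (fun h c h1 hH => ?_)
          (fun h c h1 hH => (hVstar'.2 h c h1 hH).ge) h h1 hH c
        rw [hQlift h c _ h1 hH, hV h _ h1 hH]

variable [Fintype C] [DecidableEq C] {ext : C → Z → C} {c₀ : C} {p : ℕ → C → Z → ℝ}
  {d : ℕ → C → ℝ}

theorem IsOccupancy.nonneg (hd : IsOccupancy ext c₀ p d) (hp : ∀ h c z, 0 ≤ p h c z) :
    ∀ h, 1 ≤ h → ∀ c, 0 ≤ d h c := by
  intro h h1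
  induction h, h1 using Nat.le_induction with
  | base => intro c; rw [hd.1]; positivity
  | succ h _ ih =>
    intro c'
    rw [hd.2]
    refine sum_nonneg fun c _ => sum_nonneg fun z _ => ?_
    split_ifs
    exacts [mul_nonneg (ih c) (hp h c z), le_rfl]

theorem IsOccupancy.sum_mul_sum_mul (hd : IsOccupancy ext c₀ p d) (h : ℕ) (f : C → ℝ) :
    ∑ c, d h c * ∑ z, p h c z * f (ext c z) = ∑ c', d (h + 1) c' * f c' := by
  simp only [hd.2, sum_mul, ite_mul, zero_mul]
  rw [sum_comm]
  refine sum_congr rfl fun c _ => ?_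
  rw [sum_comm, mul_sum]
  refine sum_congr rfl fun z _ => ?_
  rw [sum_ite_eq]
  simp [mul_assoc]

theorem IsOccupancy.sum_mul_eq_apply (hd : IsOccupancy ext c₀ p d) (f : C → ℝ) :
    ∑ c, d 1 c * f c = f c₀ := by
  simp [hd.1, ite_mul]

theorem IsValueFunction.sum_mul_abs_sub_le {H : ℕ} {r rhat : ℕ → C → ℝ}
    {q : ℕ → C → Z → ℝ} {V W : ℕ → C → ℝ} {εr εz : ℝ}
    (hV : IsValueFunction H ext r p V) (hW : IsValueFunction H ext rhat q W)
    (hd : IsOccupancy ext c₀ p d) (hp : ∀ h c z, 0 ≤ p h c z)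
    (hrhat : ∀ h c, |rhat h c| ≤ 1) (hq0 : ∀ h c z, 0 ≤ q h c z)
    (hq1 : ∀ h c, ∑ z, q h c z = 1)
    (herr_r : ∀ h, 1 ≤ h → h ≤ H → ∑ c, d h c * |r h c - rhat h c| ≤ εr)
    (herr_z : ∀ h, 1 ≤ h → h ≤ H → ∑ c, d h c * ∑ z, |p h c z - q h c z| ≤ εz) :
    ∀ h, 1 ≤ h → h ≤ H + 1 →
      ∑ c, d h c * |V h c - W h c| ≤
        ((H : ℝ) + 1 - h) * εr + ((H : ℝ) + 1 - h) * (H - h) / 2 * εz := by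
  refine backward_induction (by simp [hV.1, hW.1]) fun h h1 hH ih => ?_
  have hWbound : ∀ c, |W (h + 1) c| ≤ (H : ℝ) - h := fun c => by
    simpa using hW.abs_le hrhat hq0 hq1 (h + 1) (by omega) (by omega) c
  have hstep : ∀ c, |V h c - W h c| ≤ |r h c - rhat h c| + (∑ z, |p h c z - q h c z|) * (H - h)
      + ∑ z, p h c z * |V (h + 1) (ext c z) - W (h + 1) (ext c z)| := fun c => by
    rw [hV.2 h c h1 hH, hW.2 h c h1 hH]
    exact abs_add_sum_mul_sub_add_sum_mul_le _ _ _ _ _ _ _ (hp h c) fun z => hWbound _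
  have hHh : (0 : ℝ) ≤ H - h := by rw [sub_nonneg]; exact_mod_cast hH
  calc ∑ c, d h c * |V h c - W h c|
      ≤ ∑ c, d h c * (|r h c - rhat h c| + (∑ z, |p h c z - q h c z|) * (H - h)
          + ∑ z, p h c z * |V (h + 1) (ext c z) - W (h + 1) (ext c z)|) :=
        sum_le_sum fun c _ => mul_le_mul_of_nonneg_left (hstep c) (hd.nonneg hp h h1 c)
    _ = ∑ c, d h c * |r h c - rhat h c| + (∑ c, d h c * ∑ z, |p h c z - q h c z|) * (H - h)
          + ∑ c, d (h + 1) c * |V (h + 1) c - W (h + 1) c| := by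
        rw [← hd.sum_mul_sum_mul h fun c => |V (h + 1) c - W (h + 1) c|, sum_mul,
          ← sum_add_distrib, ← sum_add_distrib]
        exact sum_congr rfl fun c _ => by ring
    _ ≤ εr + εz * (H - h) + (((H : ℝ) - h) * εr + ((H : ℝ) - h) * (H - h - 1) / 2 * εz) := by
        gcongr
        · exact herr_r h h1 hH
        · exact herr_z h h1 hH
        · simpa [add_sub_add_right_eq_sub, sub_sub] using ih
    _ = ((H : ℝ) + 1 - h) * εr + ((H : ℝ) + 1 - h) * (H - h) / 2 * εz := by ring

theorem IsValueFunction.abs_sub_le_of_isOccupancy {H : ℕ} {r rhat : ℕ → C → ℝ}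
    {q : ℕ → C → Z → ℝ} {V W : ℕ → C → ℝ} {εr εz : ℝ}
    (hV : IsValueFunction H ext r p V) (hW : IsValueFunction H ext rhat q W)
    (hd : IsOccupancy ext c₀ p d) (hp : ∀ h c z, 0 ≤ p h c z)
    (hrhat : ∀ h c, |rhat h c| ≤ 1) (hq0 : ∀ h c z, 0 ≤ q h c z)
    (hq1 : ∀ h c, ∑ z, q h c z = 1)
    (herr_r : ∀ h, 1 ≤ h → h ≤ H → ∑ c, d h c * |r h c - rhat h c| ≤ εr)
    (herr_z : ∀ h, 1 ≤ h → h ≤ H → ∑ c, d h c * ∑ z, |p h c z - q h c z| ≤ εz) :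
    |V 1 c₀ - W 1 c₀| ≤ H * εr + H * (H - 1) / 2 * εz := by
  have := hV.sum_mul_abs_sub_le hW hd hp hrhat hq0 hq1 herr_r herr_z 1 le_rfl (by omega)
  rw [hd.sum_mul_eq_apply fun c => |V 1 c - W 1 c|] at this
  simpa using this

end

end FiniteHorizon

open FiniteHorizon

theorem stmt9_general {C Z Γ Chat : Type*} [Fintype C] [Fintype Z] [DecidableEq C]
    (H : ℕ)
    (ext : C → Z → C) (c₀ : C)
    (r : ℕ → C → Γ → ℝ) (P : ℕ → C → Γ → Z → ℝ)
    (compress : ℕ → C → Chat) (φhat : ℕ → Chat → Z → Chat)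
    (hcompat : ∀ h c z, compress (h + 1) (ext c z) = φhat h (compress h c) z)
    (rhat : ℕ → Chat → Γ → ℝ) (Phat : ℕ → Chat → Γ → Z → ℝ)
    (hrhat : ∀ h ch γ, |rhat h ch γ| ≤ 1)
    (hP0 : ∀ h c γ z, 0 ≤ P h c γ z)
    (hPhat0 : ∀ h ch γ z, 0 ≤ Phat h ch γ z) (hPhat1 : ∀ h ch γ, ∑ z, Phat h ch γ z = 1)
    (εr εz : ℝ)
    -- occupancy measure over common information of the true process under a strategy
    (d : (ℕ → C → Γ) → ℕ → C → ℝ)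
    (hd1 : ∀ g c, d g 1 c = if c = c₀ then 1 else 0)
    (hdrec : ∀ g h c', d g (h + 1) c' =
        ∑ c, ∑ z, (if ext c z = c' then d g h c * P h c (g h c) z else 0))
    -- per-step expected approximation errors, for every strategy
    (herr_r : ∀ g h, 1 ≤ h → h ≤ H →
        ∑ c, d g h c * |r h c (g h c) - rhat h (compress h c) (g h c)| ≤ εr)
    (herr_z : ∀ g h, 1 ≤ h → h ≤ H →
        ∑ c, d g h c *
          (∑ z, |P h c (g h c) z - Phat h (compress h c) (g h c) z|) ≤ εz)
    -- true and model value functions of a strategy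
    (Vtrue Vmodel : (ℕ → C → Γ) → ℕ → C → ℝ)
    (hVtrue_end : ∀ g c, Vtrue g (H + 1) c = 0)
    (hVmodel_end : ∀ g c, Vmodel g (H + 1) c = 0)
    (hVtrue : ∀ g h c, 1 ≤ h → h ≤ H →
        Vtrue g h c = r h c (g h c) + ∑ z, P h c (g h c) z * Vtrue g (h + 1) (ext c z))
    (hVmodel : ∀ g h c, 1 ≤ h → h ≤ H →
        Vmodel g h c = rhat h (compress h c) (g h c) +
          ∑ z, Phat h (compress h c) (g h c) z * Vmodel g (h + 1) (ext c z))
    -- backward induction in the approximate model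
    (Qstar : ℕ → Chat → Γ → ℝ) (Vstar : ℕ → Chat → ℝ) (gstar : ℕ → Chat → Γ)
    (hVend : ∀ ch, Vstar (H + 1) ch = 0)
    (hQ : ∀ h ch γ, 1 ≤ h → h ≤ H →
        Qstar h ch γ = rhat h ch γ + ∑ z, Phat h ch γ z * Vstar (h + 1) (φhat h ch z))
    (hargmax : ∀ h ch γ, 1 ≤ h → h ≤ H → Qstar h ch γ ≤ Qstar h ch (gstar h ch))
    (hV : ∀ h ch, 1 ≤ h → h ≤ H → Vstar h ch = Qstar h ch (gstar h ch)) :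
    ∀ g : ℕ → C → Γ,
      Vtrue g 1 c₀ - Vtrue (fun h' c' => gstar h' (compress h' c')) 1 c₀ ≤
        2 * (H : ℝ) * εr + (H : ℝ) ^ 2 * εz := by
  intro g
  have hclose : ∀ g', |Vtrue g' 1 c₀ - Vmodel g' 1 c₀| ≤ H * εr + H * (H - 1) / 2 * εz :=
    fun g' => IsValueFunction.abs_sub_le_of_isOccupancy ⟨hVtrue_end g', hVtrue g'⟩
      ⟨hVmodel_end g', hVmodel g'⟩ ⟨hd1 g', hdrec g'⟩ (fun h c => hP0 h c (g' h c))
      (fun h c => hrhat h _ _) (fun h c => hPhat0 h _ _) (fun h c => hPhat1 h _ _)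
      (herr_r g') (herr_z g')
  have hopt : Vmodel g 1 c₀ ≤ Vmodel (fun h' c' => gstar h' (compress h' c')) 1 c₀ :=
    IsValueFunction.le_of_argmax hcompat hPhat0 hVend hQ hargmax hV
      ⟨hVmodel_end g, hVmodel g⟩ ⟨hVmodel_end _, hVmodel _⟩ 1 le_rfl (by omega) c₀
  have hHεz : 0 ≤ (H : ℝ) * εz := by
    rcases Nat.eq_zero_or_pos H with rfl | hH
    · simp
    · refine mul_nonneg H.cast_nonneg ((sum_nonneg fun c _ => mul_nonneg ?_ ?_).trans
        (herr_z g 1 le_rfl hH))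
      · exact IsOccupancy.nonneg ⟨hd1 g, hdrec g⟩ (fun h c => hP0 h c (g h c)) 1 le_rfl c
      · exact sum_nonneg fun z _ => abs_nonneg _
  have hg := (abs_le.mp (hclose g)).2
  have hgstar := (abs_le.mp (hclose fun h' c' => gstar h' (compress h' c'))).1
  linarith

/-- Suboptimality of the model-optimal strategy in the true system: under per-step
expected reward error ≤ ε_r and increment-kernel ℓ₁ error ≤ ε_z (for every strategy),
the strategy ĝ* produced by backward induction in the approximate model is
(2H ε_r + H² ε_z)-optimal for the true problem. -/
theorem stmt9 {C Z Γ Chat : Type*} [Fintype C] [Fintype Z] [Fintype Γ] [DecidableEq C]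
    (H : ℕ) (hH : 1 ≤ H)
    (ext : C → Z → C) (c₀ : C)
    (r : ℕ → C → Γ → ℝ) (P : ℕ → C → Γ → Z → ℝ)
    (compress : ℕ → C → Chat) (φhat : ℕ → Chat → Z → Chat)
    (hcompat : ∀ h c z, compress (h + 1) (ext c z) = φhat h (compress h c) z)
    (rhat : ℕ → Chat → Γ → ℝ) (Phat : ℕ → Chat → Γ → Z → ℝ)
    (hr : ∀ h c γ, |r h c γ| ≤ 1) (hrhat : ∀ h ch γ, |rhat h ch γ| ≤ 1)
    (hP0 : ∀ h c γ z, 0 ≤ P h c γ z) (hP1 : ∀ h c γ, ∑ z, P h c γ z = 1)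
    (hPhat0 : ∀ h ch γ z, 0 ≤ Phat h ch γ z) (hPhat1 : ∀ h ch γ, ∑ z, Phat h ch γ z = 1)
    (εr εz : ℝ)
    -- occupancy measure over common information of the true process under a strategy
    (d : (ℕ → C → Γ) → ℕ → C → ℝ)
    (hd1 : ∀ g c, d g 1 c = if c = c₀ then 1 else 0)
    (hdrec : ∀ g h c', d g (h + 1) c' =
        ∑ c, ∑ z, (if ext c z = c' then d g h c * P h c (g h c) z else 0))
    -- per-step expected approximation errors, for every strategy
    (herr_r : ∀ g h, 1 ≤ h → h ≤ H →
        ∑ c, d g h c * |r h c (g h c) - rhat h (compress h c) (g h c)| ≤ εr)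
    (herr_z : ∀ g h, 1 ≤ h → h ≤ H →
        ∑ c, d g h c *
          (∑ z, |P h c (g h c) z - Phat h (compress h c) (g h c) z|) ≤ εz)
    -- true and model value functions of a strategy
    (Vtrue Vmodel : (ℕ → C → Γ) → ℕ → C → ℝ)
    (hVtrue_end : ∀ g c, Vtrue g (H + 1) c = 0)
    (hVmodel_end : ∀ g c, Vmodel g (H + 1) c = 0)
    (hVtrue : ∀ g h c, 1 ≤ h → h ≤ H →
        Vtrue g h c = r h c (g h c) + ∑ z, P h c (g h c) z * Vtrue g (h + 1) (ext c z))
    (hVmodel : ∀ g h c, 1 ≤ h → h ≤ H →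
        Vmodel g h c = rhat h (compress h c) (g h c) +
          ∑ z, Phat h (compress h c) (g h c) z * Vmodel g (h + 1) (ext c z))
    -- backward induction in the approximate model
    (Qstar : ℕ → Chat → Γ → ℝ) (Vstar : ℕ → Chat → ℝ) (gstar : ℕ → Chat → Γ)
    (hVend : ∀ ch, Vstar (H + 1) ch = 0)
    (hQ : ∀ h ch γ, 1 ≤ h → h ≤ H →
        Qstar h ch γ = rhat h ch γ + ∑ z, Phat h ch γ z * Vstar (h + 1) (φhat h ch z))
    (hargmax : ∀ h ch γ, 1 ≤ h → h ≤ H → Qstar h ch γ ≤ Qstar h ch (gstar h ch))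
    (hV : ∀ h ch, 1 ≤ h → h ≤ H → Vstar h ch = Qstar h ch (gstar h ch)) :
    ∀ g : ℕ → C → Γ,
      Vtrue g 1 c₀ - Vtrue (fun h' c' => gstar h' (compress h' c')) 1 c₀ ≤
        2 * (H : ℝ) * εr + (H : ℝ) ^ 2 * εz :=
  stmt9_general H ext c₀ r P compress φhat hcompat rhat Phat hrhat hP0 hPhat0 hPhat1 εr εz d hd1
    hdrec herr_r herr_z Vtrue Vmodel hVtrue_end hVmodel_end hVtrue hVmodel Qstar Vstar gstar hVend
    hQ hargmax hV
end

section
/- Nested private information makes decentralized one-step optimization equal centralized optimization: let P₁, …, P_n and A₁, …, A_n be finite sets, and suppose there are maps Y^{i,j}: P_i → P_j for j < i such that the private information is nested, i.e., in every realization p = (p₁,…,p_n), p_j = Y^{i,j}(p_i) for all j < i. Let μ be a probability distribution on the set of such nested joint realizations and f: (P₁×…×P_n) × (A₁×…×A_n) → ℝ. Then the maximum over decentralized decision rules γ_i: P_i → A_i of Σ_p μ(p) f(p, γ₁(p₁), …, γ_n(p_n)) equals the maximum over centralized nested rules u_i: P₁×…×P_i × A₁×…×A_{i−1} → A_i of Σ_p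 μ(p) f(p, a₁, …, a_n), where a_i = u_i(p₁,…,p_i, a₁,…,a_{i−1}) recursively. -/
/-- Nested private information makes decentralized one-step optimization equal
centralized optimization: if the joint private information is nested (lower-indexed
private information is a fixed function of higher-indexed private information on the
support of μ), then the best value achievable by decentralized rules γ_i : P_i → A_i
equals the best value achievable by centralized nested rules, where agent i may use
all lower-indexed private information and all lower-indexed actions, the actions being
determined recursively as the unique fixed point of the rule profile. -/
theorem stmt11 {n : ℕ} (P A : Fin n → Type*)
    [∀ i, Fintype (P i)] [∀ i, Fintype (A i)] [∀ i, Nonempty (A i)]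
    (Y : ∀ i j : Fin n, P i → P j)
    (μ : (∀ i, P i) → ℝ) (hμ0 : ∀ p, 0 ≤ μ p) (hμ1 : ∑ p, μ p = 1)
    (hnest : ∀ p, μ p ≠ 0 → ∀ i j : Fin n, j < i → p j = Y i j (p i))
    (f : (∀ i, P i) → (∀ i, A i) → ℝ) :
    (⨆ γ : ∀ i, P i → A i, ∑ p, μ p * f p (fun i => γ i (p i))) =
      ⨆ w : {w : (∀ i : Fin n, (∀ j, P j) → (∀ j, A j) → A i) ×
               ((∀ j, P j) → ∀ j, A j) //
             (∀ (i : Fin n) (p p' : ∀ j, P j) (a a' : ∀ j, A j),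
                (∀ j, j ≤ i → p j = p' j) → (∀ j, j < i → a j = a' j) →
                w.1 i p a = w.1 i p' a') ∧
             (∀ p i, w.2 p i = w.1 i p (w.2 p))},
        ∑ p, μ p * f p (w.1.2 p) := by
  classical
  set W := {w : (∀ i : Fin n, (∀ j, P j) → (∀ j, A j) → A i) ×
               ((∀ j, P j) → ∀ j, A j) //
             (∀ (i : Fin n) (p p' : ∀ j, P j) (a a' : ∀ j, A j),
                (∀ j, j ≤ i → p j = p' j) → (∀ j, j < i → a j = a' j) →
                w.1 i p a = w.1 i p' a') ∧
             (∀ p i, w.2 p i = w.1 i p (w.2 p))} with hW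
  have hP : Nonempty (∀ i, P i) := by
    by_contra h
    rw [not_nonempty_iff] at h
    rw [Finset.univ_eq_empty, Finset.sum_empty] at hμ1
    norm_num at hμ1
  obtain ⟨p₀⟩ := hP
  have a₀ : ∀ j, A j := fun j => Classical.arbitrary _
  haveI : Nonempty W :=
    ⟨⟨(fun i _ _ => a₀ i, fun _ => a₀), fun _ _ _ _ _ _ _ => rfl, fun _ _ => rfl⟩⟩
  haveI : Finite W := by
    haveI : Finite ((∀ i : Fin n, (∀ j, P j) → (∀ j, A j) → A i) ×
               ((∀ j, P j) → ∀ j, A j)) := by infer_instance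
    exact Subtype.finite
  have bdd1 : BddAbove (Set.range fun γ : ∀ i, P i → A i =>
      ∑ p, μ p * f p (fun i => γ i (p i))) := Set.Finite.bddAbove (Set.finite_range _)
  have bdd2 : BddAbove (Set.range fun w : W => ∑ p, μ p * f p (w.1.2 p)) :=
    Set.Finite.bddAbove (Set.finite_range _)
  apply le_antisymm
  · apply ciSup_le
    intro γ
    exact le_ciSup bdd2 (⟨(fun i p a => γ i (p i), fun p i => γ i (p i)),
        fun i p p' a a' hp ha => congrArg (γ i) (hp i le_rfl),
        fun p i => rfl⟩ : W)
  · apply ciSup_le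
    intro w
    -- w.1.2 p i depends only on p j for j ≤ i
    have key : ∀ k, ∀ (i : Fin n), i.1 = k → ∀ p q : (∀ j, P j),
        (∀ j, j ≤ i → p j = q j) → w.1.2 p i = w.1.2 q i := by
      intro k
      induction k using Nat.strong_induction_on with
      | _ k ih =>
        intro i hik p q hpq
        rw [w.2.2 p i, w.2.2 q i]
        exact w.2.1 i p q _ _ (fun j hj => hpq j hj)
          (fun j hj => ih j.1 (by rw [← hik]; exact hj) j rfl p q
            (fun j' hj' => hpq j' (le_trans hj' (le_of_lt hj))))
    let phat : ∀ i : Fin n, P i → ∀ j, P j := fun i q =>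
      Function.update (fun j => if h : j < i then Y i j q else p₀ j) i q
    let γ : ∀ i, P i → A i := fun i q => w.1.2 (phat i q) i
    have hγ : ∀ p : (∀ j, P j), μ p ≠ 0 → ∀ i, γ i (p i) = w.1.2 p i := by
      intro p hp i
      apply key i.1 i rfl
      intro j hj
      rcases eq_or_lt_of_le hj with h | h
      · subst h; simp [phat]
      · simp only [phat, Function.update_of_ne (ne_of_lt h), dif_pos h]
        exact (hnest p hp i j h).symm
    have hsum : ∑ p, μ p * f p (w.1.2 p) = ∑ p, μ p * f p (fun i => γ i (p i)) := by
      apply Finset.sum_congr rfl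
      intro p _
      by_cases hp : μ p = 0
      · simp [hp]
      · congr 1
        apply congrArg
        funext i
        exact (hγ p hp i).symm
    rw [hsum]
    exact le_ciSup bdd1 γ
end

section
/- Additive decomposition of the optimal Q-function under factorized structures: consider a finite-horizon (length H) decision problem where for each step h the approximate common information factorizes as ĉ_h = (ĉ_{1,h},…,ĉ_{n,h}) with per-agent deterministic updates ĉ_{i,h+1} = φ̂_{i,h+1}(ĉ_{i,h}, z_{i,h+1}), the belief factorizes as P_h^{M,c}(s, p | ĉ) = Π_{i=1}^n P_{i,h}^{M,c}(s_i, p_i | ĉ_i), the transitions and emissions factorize as T_h(s'|s,a) = Π_i T_{i,h}(s'_i|s_i, a_i) and O_h(o|s) = Π_i O_{i,h}(o_i|s_i), and the reward is additive: R_h(s, a, p) = Σ_i R_{i,h}(s_i, a_i, p_i). Then for every h and every joint prescription γ_h = (γ_{1,h},…,γ_{n,h}), the optimal model Q-function decomposes as Q*_h(ĉ_h, γ_h) = Σ_{i=1}^n F_{i,h}(ĉ_{i,h}, γ_{i,h}) for some functions F_{i,h}, and consequently a joint maximizer of Q*_h is obtained by independently maximizing each F_{i,h} over γ_{i,h}.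 -/
open Finset

lemma key_sum {n : ℕ} (X : Fin n → Type*) [∀ i, Fintype (X i)]
    (w f : ∀ i, X i → ℝ) (hw : ∀ i, ∑ x, w i x = 1) :
    ∑ x : ∀ i, X i, (∏ i, w i (x i)) * ∑ i, f i (x i)
      = ∑ i, ∑ xi, w i xi * f i xi := by
  classical
  simp_rw [mul_sum]
  rw [Finset.sum_comm]
  refine Finset.sum_congr rfl fun i _ => ?_
  set h : ∀ j, X j → ℝ := Function.update w i (fun y => w i y * f i y) with hh
  have ha : ∀ x : ∀ j, X j, (∏ j, w j (x j)) * f i (x i) = ∏ j, h j (x j) := by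
    intro x
    rw [← Finset.mul_prod_erase univ (fun j => h j (x j)) (mem_univ i),
        ← Finset.mul_prod_erase univ (fun j => w j (x j)) (mem_univ i)]
    have h1 : h i = fun y => w i y * f i y := Function.update_self ..
    have h2 : ∀ j ∈ univ.erase i, h j (x j) = w j (x j) := by
      intro j hj
      rw [hh, Function.update_of_ne (Finset.mem_erase.1 hj).1]
    rw [Finset.prod_congr rfl h2, h1]
    ring
  simp_rw [ha]
  rw [← Fintype.prod_sum, ← Finset.mul_prod_erase univ (fun j => ∑ y, h j y) (mem_univ i)]
  have h1 : h i = fun y => w i y * f i y := Function.update_self ..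
  have h2 : ∀ j ∈ univ.erase i, (∑ y, h j y) = 1 := by
    intro j hj
    rw [hh]
    have : ∀ y : X j, Function.update w i (fun y => w i y * f i y) j y = w j y := by
      intro y; rw [Function.update_of_ne (Finset.mem_erase.1 hj).1]
    simp_rw [this]; exact hw j
  rw [Finset.prod_congr rfl h2, h1]
  simp

/-- merging four nested pi-sums into one pi-sum over a product type -/
lemma sum_pi_prod4 {n : ℕ} (A B C D : Fin n → Type*)
    [∀ i, Fintype (A i)] [∀ i, Fintype (B i)] [∀ i, Fintype (C i)] [∀ i, Fintype (D i)]
    (g : (∀ i, A i × B i × C i × D i) → ℝ) :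
    ∑ x : ∀ i, A i × B i × C i × D i, g x
      = ∑ a : ∀ i, A i, ∑ b : ∀ i, B i, ∑ c : ∀ i, C i, ∑ d : ∀ i, D i,
          g (fun i => (a i, b i, c i, d i)) := by
  let e : ((∀ i, A i) × (∀ i, B i) × (∀ i, C i) × (∀ i, D i)) ≃ (∀ i, A i × B i × C i × D i) :=
    { toFun := fun q i => (q.1 i, q.2.1 i, q.2.2.1 i, q.2.2.2 i)
      invFun := fun x => (fun i => (x i).1, fun i => (x i).2.1,
        fun i => (x i).2.2.1, fun i => (x i).2.2.2)
      left_inv := fun q => rfl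
      right_inv := fun x => rfl }
  rw [← Equiv.sum_comp e g]
  simp [Fintype.sum_prod_type, e]

/-- sup of an independent sum equals sum of sups (finite nonempty index sets) -/
lemma ciSup_indep_sum {n : ℕ} (B : Fin n → Type*) [∀ i, Fintype (B i)]
    [∀ i, Nonempty (B i)] (F : ∀ i, B i → ℝ) :
    ⨆ b : ∀ i, B i, ∑ i, F i (b i) = ∑ i, ⨆ bi : B i, F i bi := by
  have hbdd : ∀ i, BddAbove (Set.range (F i)) := fun i => (Set.finite_range _).bddAbove
  have hbdd' : BddAbove (Set.range fun b : ∀ i, B i => ∑ i, F i (b i)) :=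
    (Set.finite_range _).bddAbove
  apply le_antisymm
  · refine ciSup_le fun b => Finset.sum_le_sum fun i _ => le_ciSup (hbdd i) (b i)
  · choose bstar hbstar using fun i => Finite.exists_max (F i)
    calc ∑ i, ⨆ bi : B i, F i bi ≤ ∑ i, F i (bstar i) :=
          Finset.sum_le_sum fun i _ => ciSup_le fun bi => hbstar i bi
      _ ≤ ⨆ b : ∀ i, B i, ∑ i, F i (b i) := le_ciSup hbdd' bstar

lemma Qdec {n : ℕ} (S P A Obs Chat Z : Fin n → Type*)
    [∀ i, Fintype (S i)] [∀ i, Fintype (P i)] [∀ i, Fintype (A i)]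
    [∀ i, Fintype (Obs i)]
    (φhat : ∀ i, ℕ → Chat i → Z i → Chat i)
    (beli : ∀ i, ℕ → Chat i → S i → P i → ℝ)
    (hbel1 : ∀ i h ch, ∑ s, ∑ p, beli i h ch s p = 1)
    (Ti : ∀ i, ℕ → S i → A i → S i → ℝ)
    (hT1 : ∀ i h s a, ∑ s', Ti i h s a s' = 1)
    (Oi : ∀ i, ℕ → S i → Obs i → ℝ)
    (hO1 : ∀ i h s, ∑ o, Oi i h s o = 1)
    (Ri : ∀ i, ℕ → S i → A i → P i → ℝ)
    (ζ : ∀ i, ℕ → P i → A i → Obs i → Z i)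
    (Qstar : ℕ → (∀ i, Chat i) → (∀ i, P i → A i) → ℝ)
    (Vstar : ℕ → (∀ i, Chat i) → ℝ)
    (h : ℕ)
    (hQh : ∀ (ch : ∀ i, Chat i) (γ : ∀ i, P i → A i),
        Qstar h ch γ =
          ∑ s : ∀ i, S i, ∑ p : ∀ i, P i,
            (∏ i, beli i h (ch i) (s i) (p i)) *
              ((∑ i, Ri i h (s i) (γ i (p i)) (p i)) +
                ∑ s' : ∀ i, S i, ∑ o : ∀ i, Obs i,
                  (∏ i, Ti i h (s i) (γ i (p i)) (s' i)) *
                    (∏ i, Oi i (h + 1) (s' i) (o i)) *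
                    Vstar (h + 1)
                      (fun i => φhat i h (ch i) (ζ i h (p i) (γ i (p i)) (o i)))))
    (G : ∀ i, Chat i → ℝ)
    (hG : ∀ ch : ∀ i, Chat i, Vstar (h + 1) ch = ∑ i, G i (ch i)) :
    ∀ (ch : ∀ i, Chat i) (γ : ∀ i, P i → A i),
      Qstar h ch γ = ∑ i,
        ∑ xi : S i × P i × S i × Obs i,
          (beli i h (ch i) xi.1 xi.2.1 * Ti i h xi.1 (γ i xi.2.1) xi.2.2.1 *
              Oi i (h + 1) xi.2.2.1 xi.2.2.2) *
            (Ri i h xi.1 (γ i xi.2.1) xi.2.1 +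
              G i (φhat i h (ch i) (ζ i h xi.2.1 (γ i xi.2.1) xi.2.2.2))) := by
  intro ch γ
  classical
  -- the per-agent weight
  set w : ∀ i, S i × P i × S i × Obs i → ℝ := fun i xi =>
    beli i h (ch i) xi.1 xi.2.1 * Ti i h xi.1 (γ i xi.2.1) xi.2.2.1 *
      Oi i (h + 1) xi.2.2.1 xi.2.2.2 with hwdef
  set f : ∀ i, S i × P i × S i × Obs i → ℝ := fun i xi =>
    Ri i h xi.1 (γ i xi.2.1) xi.2.1 +
      G i (φhat i h (ch i) (ζ i h xi.2.1 (γ i xi.2.1) xi.2.2.2)) with hfdef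
  have hw1 : ∀ i, ∑ xi : S i × P i × S i × Obs i, w i xi = 1 := by
    intro i
    rw [hwdef]
    simp only [Fintype.sum_prod_type]
    simp_rw [mul_assoc, ← Finset.mul_sum]
    simp [hO1, hT1, hbel1]
  rw [← key_sum _ w f hw1, sum_pi_prod4]
  rw [hQh]
  refine Finset.sum_congr rfl fun s _ => Finset.sum_congr rfl fun p _ => ?_
  simp_rw [hG]
  simp only [hwdef, hfdef]
  simp_rw [Finset.prod_mul_distrib, Finset.sum_add_distrib]
  set B : ℝ := ∏ i, beli i h (ch i) (s i) (p i) with hB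
  set R : ℝ := ∑ i, Ri i h (s i) (γ i (p i)) (p i) with hR
  have key1 : ∀ s' : ∀ i, S i,
      (∑ o : ∀ i, Obs i,
        ((B * ∏ i, Ti i h (s i) (γ i (p i)) (s' i)) * ∏ i, Oi i (h + 1) (s' i) (o i)) *
          (R + ∑ i, G i (φhat i h (ch i) (ζ i h (p i) (γ i (p i)) (o i)))))
      = (B * ∏ i, Ti i h (s i) (γ i (p i)) (s' i)) * R +
          ∑ o : ∀ i, Obs i,
            ((B * ∏ i, Ti i h (s i) (γ i (p i)) (s' i)) * ∏ i, Oi i (h + 1) (s' i) (o i)) *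
              ∑ i, G i (φhat i h (ch i) (ζ i h (p i) (γ i (p i)) (o i))) := by
    intro s'
    simp_rw [mul_add]
    rw [Finset.sum_add_distrib]
    congr 1
    simp_rw [show ∀ o : ∀ i, Obs i,
        ((B * ∏ i, Ti i h (s i) (γ i (p i)) (s' i)) * ∏ i, Oi i (h + 1) (s' i) (o i)) * R
        = ((B * ∏ i, Ti i h (s i) (γ i (p i)) (s' i)) * R) * ∏ i, Oi i (h + 1) (s' i) (o i)
      from fun o => by ring]
    rw [← Finset.mul_sum, ← Fintype.prod_sum]
    simp [hO1]
  simp_rw [key1]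
  rw [Finset.sum_add_distrib, mul_add]
  congr 1
  · rw [eq_comm]
    simp_rw [show ∀ s' : ∀ i, S i,
        (B * ∏ i, Ti i h (s i) (γ i (p i)) (s' i)) * R
        = (B * R) * ∏ i, Ti i h (s i) (γ i (p i)) (s' i) from fun s' => by ring]
    rw [← Finset.mul_sum, ← Fintype.prod_sum]
    simp [hT1]
  · simp_rw [show ∀ (s' : ∀ i, S i) (o : ∀ i, Obs i),
        ((B * ∏ i, Ti i h (s i) (γ i (p i)) (s' i)) * ∏ i, Oi i (h + 1) (s' i) (o i)) *
            ∑ i, G i (φhat i h (ch i) (ζ i h (p i) (γ i (p i)) (o i)))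
        = B * (((∏ i, Ti i h (s i) (γ i (p i)) (s' i)) * ∏ i, Oi i (h + 1) (s' i) (o i)) *
            ∑ i, G i (φhat i h (ch i) (ζ i h (p i) (γ i (p i)) (o i))))
      from fun s' o => by ring, ← Finset.mul_sum]

/-- Additive decomposition of the optimal Q-function under factorized structures:
with per-agent factorized beliefs, transitions, emissions, information updates, and
an additive reward, the optimal model Q-function at every step decomposes as a sum of
per-agent terms F_i(ĉ_i, γ_i), and a joint maximizer is obtained by independently
maximizing each term. -/
theorem stmt12 {n : ℕ} (S P A Obs Chat Z : Fin n → Type*)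
    [∀ i, Fintype (S i)] [∀ i, Fintype (P i)] [∀ i, Fintype (A i)]
    [∀ i, Fintype (Obs i)] [∀ i, Fintype (Chat i)] [∀ i, Fintype (Z i)]
    [∀ i, Nonempty (A i)]
    (H : ℕ)
    (φhat : ∀ i, ℕ → Chat i → Z i → Chat i)
    (beli : ∀ i, ℕ → Chat i → S i → P i → ℝ)
    (hbel0 : ∀ i h ch s p, 0 ≤ beli i h ch s p)
    (hbel1 : ∀ i h ch, ∑ s, ∑ p, beli i h ch s p = 1)
    (Ti : ∀ i, ℕ → S i → A i → S i → ℝ)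
    (hT0 : ∀ i h s a s', 0 ≤ Ti i h s a s')
    (hT1 : ∀ i h s a, ∑ s', Ti i h s a s' = 1)
    (Oi : ∀ i, ℕ → S i → Obs i → ℝ)
    (hO0 : ∀ i h s o, 0 ≤ Oi i h s o)
    (hO1 : ∀ i h s, ∑ o, Oi i h s o = 1)
    (Ri : ∀ i, ℕ → S i → A i → P i → ℝ)
    (ζ : ∀ i, ℕ → P i → A i → Obs i → Z i)
    (Qstar : ℕ → (∀ i, Chat i) → (∀ i, P i → A i) → ℝ)
    (Vstar : ℕ → (∀ i, Chat i) → ℝ)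
    (hVend : ∀ ch, Vstar (H + 1) ch = 0)
    (hQ : ∀ (h : ℕ) (ch : ∀ i, Chat i) (γ : ∀ i, P i → A i), 1 ≤ h → h ≤ H →
        Qstar h ch γ =
          ∑ s : ∀ i, S i, ∑ p : ∀ i, P i,
            (∏ i, beli i h (ch i) (s i) (p i)) *
              ((∑ i, Ri i h (s i) (γ i (p i)) (p i)) +
                ∑ s' : ∀ i, S i, ∑ o : ∀ i, Obs i,
                  (∏ i, Ti i h (s i) (γ i (p i)) (s' i)) *
                    (∏ i, Oi i (h + 1) (s' i) (o i)) *
                    Vstar (h + 1)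
                      (fun i => φhat i h (ch i) (ζ i h (p i) (γ i (p i)) (o i)))))
    (hV : ∀ (h : ℕ) (ch : ∀ i, Chat i), 1 ≤ h → h ≤ H →
        Vstar h ch = ⨆ γ : ∀ i, P i → A i, Qstar h ch γ) :
    ∀ h : ℕ, 1 ≤ h → h ≤ H →
      ∃ F : ∀ i : Fin n, Chat i → (P i → A i) → ℝ,
        (∀ (ch : ∀ i, Chat i) (γ : ∀ i, P i → A i),
            Qstar h ch γ = ∑ i, F i (ch i) (γ i)) ∧
        (∀ (ch : ∀ i, Chat i) (γstar : ∀ i, P i → A i),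
            (∀ (i : Fin n) (γi : P i → A i), F i (ch i) γi ≤ F i (ch i) (γstar i)) →
            ∀ γ : ∀ i, P i → A i, Qstar h ch γ ≤ Qstar h ch γstar) := by
  classical
  -- downward induction: decomposition of the value function
  have Vdec : ∀ d h : ℕ, h + d = H + 1 → 1 ≤ h →
      ∃ G : ∀ i, Chat i → ℝ, ∀ ch : ∀ i, Chat i, Vstar h ch = ∑ i, G i (ch i) := by
    intro d
    induction d with
    | zero =>
      intro h hd _
      refine ⟨fun _ _ => 0, fun ch => ?_⟩
      have hh : h = H + 1 := by omega
      subst hh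
      rw [hVend]
      simp
    | succ d ih =>
      intro h hd h1
      have h2 : h ≤ H := by omega
      obtain ⟨G, hGd⟩ := ih (h + 1) (by omega) (by omega)
      have hq := Qdec S P A Obs Chat Z φhat beli hbel1 Ti hT1 Oi hO1 Ri ζ Qstar Vstar h
        (fun ch γ => hQ h ch γ h1 h2) G hGd
      refine ⟨fun i c => ⨆ γi : P i → A i,
        ∑ xi : S i × P i × S i × Obs i,
          (beli i h c xi.1 xi.2.1 * Ti i h xi.1 (γi xi.2.1) xi.2.2.1 *
              Oi i (h + 1) xi.2.2.1 xi.2.2.2) *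
            (Ri i h xi.1 (γi xi.2.1) xi.2.1 +
              G i (φhat i h c (ζ i h xi.2.1 (γi xi.2.1) xi.2.2.2))), fun ch => ?_⟩
      rw [hV h ch h1 h2]
      simp_rw [hq ch]
      exact ciSup_indep_sum (fun i => P i → A i)
        (fun i γi => ∑ xi : S i × P i × S i × Obs i,
          (beli i h (ch i) xi.1 xi.2.1 * Ti i h xi.1 (γi xi.2.1) xi.2.2.1 *
              Oi i (h + 1) xi.2.2.1 xi.2.2.2) *
            (Ri i h xi.1 (γi xi.2.1) xi.2.1 +
              G i (φhat i h (ch i) (ζ i h xi.2.1 (γi xi.2.1) xi.2.2.2))))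
  intro h h1 h2
  obtain ⟨G, hGd⟩ := Vdec (H - h) (h + 1) (by omega) (by omega)
  have hq := Qdec S P A Obs Chat Z φhat beli hbel1 Ti hT1 Oi hO1 Ri ζ Qstar Vstar h
    (fun ch γ => hQ h ch γ h1 h2) G hGd
  refine ⟨fun i c γi =>
    ∑ xi : S i × P i × S i × Obs i,
      (beli i h c xi.1 xi.2.1 * Ti i h xi.1 (γi xi.2.1) xi.2.2.1 *
          Oi i (h + 1) xi.2.2.1 xi.2.2.2) *
        (Ri i h xi.1 (γi xi.2.1) xi.2.1 +
          G i (φhat i h c (ζ i h xi.2.1 (γi xi.2.1) xi.2.2.2))),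
    fun ch γ => hq ch γ, ?_⟩
  intro ch γstar hmax γ
  rw [hq ch γ, hq ch γstar]
  exact Finset.sum_le_sum fun i _ => hmax i (γ i)
end

section
/- Additive decomposition of the optimal Q-function under turn-based structures: consider a finite-horizon decision problem in which at step h only a single designated agent ct(h) affects the state transition, i.e., T_h(s'|s, a) = T_h(s'|s, a_{ct(h)}); the reward is additive, R_h(s, a) = Σ_{i=1}^n R_{i,h}(s, a_i); and the increment of common information depends only on the controller's action, so the compressed common information update depends only on γ_{ct(h),h}. Then for every step h, approximate common information ĉ_h, and joint prescription γ_h, the optimal model Q-function satisfies Q*_h(ĉ_h, γ_h) = Σ_{i=1}^n U_{i,h}(ĉ_h, γ_{i,h}) for some functions U_{i,h}, so joint maximization over prescriptions reduces to n independent per-agent maximizations. -/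
/-- Additive decomposition of the optimal Q-function under turn-based structures:
if at step h only the designated controller ct(h) affects the state transition, the
reward is additive across agents, and the common-information increment depends only
on the controller's action (and the new observation), then the optimal model
Q-function decomposes as a sum of per-agent terms U_i(ĉ, γ_i), so joint maximization
reduces to independent per-agent maximizations. -/
theorem stmt13 {n : ℕ} {St Obs Z Chat : Type*} (P A : Fin n → Type*)
    [Fintype St] [Fintype Obs] [Fintype Z]
    [∀ i, Fintype (P i)] [∀ i, Fintype (A i)]
    (H : ℕ) (ct : ℕ → Fin n)
    (T : ∀ h : ℕ, St → A (ct h) → St → ℝ)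
    (hT0 : ∀ h s a s', 0 ≤ T h s a s') (hT1 : ∀ h s a, ∑ s', T h s a s' = 1)
    (Oem : ℕ → St → Obs → ℝ)
    (hO0 : ∀ h s o, 0 ≤ Oem h s o) (hO1 : ∀ h s, ∑ o, Oem h s o = 1)
    (R : ∀ i : Fin n, ℕ → St → A i → ℝ)
    (ζ : ∀ h : ℕ, A (ct h) → Obs → Z)
    (φhat : ℕ → Chat → Z → Chat)
    (bel : ℕ → Chat → St → (∀ i, P i) → ℝ)
    (hbel0 : ∀ h ch s p, 0 ≤ bel h ch s p)
    (hbel1 : ∀ h ch, ∑ s, ∑ p : ∀ i, P i, bel h ch s p = 1)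
    (Qstar : ℕ → Chat → (∀ i, P i → A i) → ℝ) (Vstar : ℕ → Chat → ℝ)
    (hVend : ∀ ch, Vstar (H + 1) ch = 0)
    (hQ : ∀ (h : ℕ) (ch : Chat) (γ : ∀ i, P i → A i), 1 ≤ h → h ≤ H →
        Qstar h ch γ = ∑ s, ∑ p : ∀ i, P i,
          bel h ch s p *
            ((∑ i, R i h s (γ i (p i))) +
              ∑ s', ∑ o,
                T h s (γ (ct h) (p (ct h))) s' * Oem (h + 1) s' o *
                  Vstar (h + 1) (φhat h ch (ζ h (γ (ct h) (p (ct h))) o))))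
    (hV : ∀ (h : ℕ) (ch : Chat), 1 ≤ h → h ≤ H →
        Vstar h ch = ⨆ γ : ∀ i, P i → A i, Qstar h ch γ) :
    ∀ h : ℕ, 1 ≤ h → h ≤ H →
      ∃ U : ∀ i : Fin n, Chat → (P i → A i) → ℝ,
        (∀ (ch : Chat) (γ : ∀ i, P i → A i),
            Qstar h ch γ = ∑ i, U i ch (γ i)) ∧
        (∀ (ch : Chat) (γstar : ∀ i, P i → A i),
            (∀ (i : Fin n) (γi : P i → A i), U i ch γi ≤ U i ch (γstar i)) →
            ∀ γ : ∀ i, P i → A i, Qstar h ch γ ≤ Qstar h ch γstar) := by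
  
  intro h h1 hH
  classical
  set cont : Chat → St → A (ct h) → ℝ := fun ch s a =>
    ∑ s', ∑ o, T h s a s' * Oem (h + 1) s' o *
      Vstar (h + 1) (φhat h ch (ζ h a o)) with hcont
  set G : ∀ i : Fin n, Chat → St → A i → ℝ := fun i ch s a =>
    if h' : i = ct h then cont ch s (h' ▸ a) else 0 with hG
  have hGsum : ∀ (ch : Chat) (s : St) (f : ∀ i, A i),
      ∑ i, G i ch s (f i) = cont ch s (f (ct h)) := by
    intro ch s f
    rw [Finset.sum_eq_single_of_mem (ct h) (Finset.mem_univ _)]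
    · simp [hG]
    · intro i _ hi
      simp [hG, hi]
  set U : ∀ i : Fin n, Chat → (P i → A i) → ℝ := fun i ch γi =>
    ∑ s, ∑ p : ∀ j, P j, bel h ch s p * (R i h s (γi (p i)) + G i ch s (γi (p i)))
    with hU
  have hdecomp : ∀ (ch : Chat) (γ : ∀ i, P i → A i),
      Qstar h ch γ = ∑ i, U i ch (γ i) := by
    intro ch γ
    have hrhs : ∑ i, U i ch (γ i) = ∑ s, ∑ p : ∀ j, P j,
        ∑ i, bel h ch s p * (R i h s (γ i (p i)) + G i ch s (γ i (p i))) := by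
      simp only [hU]
      rw [Finset.sum_comm]
      exact Finset.sum_congr rfl fun s _ => Finset.sum_comm
    rw [hQ h ch γ h1 hH, hrhs]
    refine Finset.sum_congr rfl fun s _ => Finset.sum_congr rfl fun p _ => ?_
    rw [← Finset.mul_sum, Finset.sum_add_distrib,
      hGsum ch s (fun i => γ i (p i))]
  refine ⟨U, hdecomp, ?_⟩
  intro ch γstar hle γ
  rw [hdecomp ch γ, hdecomp ch γstar]
  exact Finset.sum_le_sum fun i _ => hle i (γ i)
end

section
/- If a strategy component's input and output are measurable with respect to the conditioning information, changing it does not change the conditional law: let (s, p, c, τ, a) be random elements of finite sets generated by a strategy profile g, let g' be obtained from g by replacing the decision rule of one agent-timestep whose input information τ₀ and resulting action a₀ are both deterministic measurable functions of c (i.e., τ₀ = β₁(c) and a₀ = β₂(c) under both g and g'). Then for every value c that has positive probability under both g and g', P(s, p | c, g) = P(s, p | c, g'). -/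
/-- The trajectory generated by primitive randomness ω when the distinguished
agent-timestep uses decision rule δ : the rule is applied to its input information
τ₀(ω) (generated before the rule acts), and the resulting state, private information,
and common information are determined by the fixed system map F. -/
def traj15 {Ω T Act St Pt Ct : Type*} (τ0 : Ω → T) (F : Ω → Act → St × Pt × Ct)
    (δ : T → Act) (ω : Ω) : St × Pt × Ct :=
  F ω (δ (τ0 ω))

/-- Joint probability of (state, private information, common information) under rule δ. -/
noncomputable def joint15 {Ω T Act St Pt Ct : Type*} [Fintype Ω]
    [DecidableEq St] [DecidableEq Pt] [DecidableEq Ct]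
    (μ : Ω → ℝ) (τ0 : Ω → T) (F : Ω → Act → St × Pt × Ct) (δ : T → Act)
    (s : St) (p : Pt) (c : Ct) : ℝ :=
  ∑ ω, if traj15 τ0 F δ ω = (s, p, c) then μ ω else 0

/-- Marginal probability of the common information under rule δ. -/
noncomputable def marg15 {Ω T Act St Pt Ct : Type*} [Fintype Ω] [DecidableEq Ct]
    (μ : Ω → ℝ) (τ0 : Ω → T) (F : Ω → Act → St × Pt × Ct) (δ : T → Act)
    (c : Ct) : ℝ :=
  ∑ ω, if (traj15 τ0 F δ ω).2.2 = c then μ ω else 0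

/-- If the replaced decision rule's input information and resulting action are both
deterministic functions of the common information (under both profiles g and g'),
then changing that rule does not change the conditional law of the state and private
information given any common information reachable under both profiles. -/
theorem stmt15 {Ω T Act St Pt Ct : Type*} [Fintype Ω]
    [DecidableEq St] [DecidableEq Pt] [DecidableEq Ct]
    (μ : Ω → ℝ) (hμ0 : ∀ ω, 0 ≤ μ ω) (hμ1 : ∑ ω, μ ω = 1)
    (τ0 : Ω → T) (F : Ω → Act → St × Pt × Ct)
    (g g' : T → Act) (β₁ : Ct → T) (β₂ : Ct → Act)
    (hg1 : ∀ ω, μ ω ≠ 0 → τ0 ω = β₁ ((traj15 τ0 F g ω).2.2))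
    (hg2 : ∀ ω, μ ω ≠ 0 → g (τ0 ω) = β₂ ((traj15 τ0 F g ω).2.2))
    (hg'1 : ∀ ω, μ ω ≠ 0 → τ0 ω = β₁ ((traj15 τ0 F g' ω).2.2))
    (hg'2 : ∀ ω, μ ω ≠ 0 → g' (τ0 ω) = β₂ ((traj15 τ0 F g' ω).2.2)) :
    ∀ (s : St) (p : Pt) (c : Ct),
      0 < marg15 μ τ0 F g c → 0 < marg15 μ τ0 F g' c →
      joint15 μ τ0 F g s p c / marg15 μ τ0 F g c =
        joint15 μ τ0 F g' s p c / marg15 μ τ0 F g' c := by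
  intro s p c hg_pos hg'_pos
  -- extract witnesses
  have hw : ∀ (δ : T → Act), 0 < marg15 μ τ0 F δ c →
      ∃ ω, (traj15 τ0 F δ ω).2.2 = c ∧ μ ω ≠ 0 := by
    intro δ hpos
    by_contra h
    push_neg at h
    have : marg15 μ τ0 F δ c = 0 := by
      unfold marg15
      refine Finset.sum_eq_zero fun ω _ => ?_
      by_cases hc : (traj15 τ0 F δ ω).2.2 = c
      · simp [hc, h ω hc]
      · simp [hc]
    linarith
  obtain ⟨ω₁, hω₁c, hω₁⟩ := hw g hg_pos
  obtain ⟨ω₂, hω₂c, hω₂⟩ := hw g' hg'_pos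
  -- g and g' agree on β₁ c
  have hgβ : g (β₁ c) = β₂ c := by
    have := hg2 ω₁ hω₁; have h1 := hg1 ω₁ hω₁
    rw [hω₁c] at this h1; rw [← h1]; exact this
  have hg'β : g' (β₁ c) = β₂ c := by
    have := hg'2 ω₂ hω₂; have h1 := hg'1 ω₂ hω₂
    rw [hω₂c] at this h1; rw [← h1]; exact this
  -- trajectories agree on {ω : μ ω ≠ 0, common info = c}
  have key : ∀ ω, μ ω ≠ 0 →
      ((traj15 τ0 F g ω).2.2 = c → traj15 τ0 F g' ω = traj15 τ0 F g ω) ∧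
      ((traj15 τ0 F g' ω).2.2 = c → traj15 τ0 F g ω = traj15 τ0 F g' ω) := by
    intro ω hμ
    constructor
    · intro hc
      have h1 := hg1 ω hμ; rw [hc] at h1
      have h2 := hg2 ω hμ; rw [hc] at h2
      unfold traj15
      rw [show g' (τ0 ω) = g (τ0 ω) by rw [h1, hgβ, hg'β]]
    · intro hc
      have h1 := hg'1 ω hμ; rw [hc] at h1
      have h2 := hg'2 ω hμ; rw [hc] at h2
      unfold traj15
      rw [show g (τ0 ω) = g' (τ0 ω) by rw [h1, hgβ, hg'β]]
  have hjoint : joint15 μ τ0 F g s p c = joint15 μ τ0 F g' s p c := by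
    unfold joint15
    refine Finset.sum_congr rfl fun ω _ => ?_
    by_cases hμ : μ ω = 0
    · simp [hμ]
    · by_cases h1 : traj15 τ0 F g ω = (s, p, c)
      · have := ((key ω hμ).1 (by rw [h1])).trans h1
        simp [h1, this]
      · by_cases h2 : traj15 τ0 F g' ω = (s, p, c)
        · exact absurd (((key ω hμ).2 (by rw [h2])).trans h2) h1
        · simp [h1, h2]
  have hmarg : marg15 μ τ0 F g c = marg15 μ τ0 F g' c := by
    unfold marg15
    refine Finset.sum_congr rfl fun ω _ => ?_
    by_cases hμ : μ ω = 0
    · simp [hμ]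
    · by_cases h1 : (traj15 τ0 F g ω).2.2 = c
      · have : (traj15 τ0 F g' ω).2.2 = c := by rw [(key ω hμ).1 h1]; exact h1
        simp [h1, this]
      · by_cases h2 : (traj15 τ0 F g' ω).2.2 = c
        · exact absurd (by rw [(key ω hμ).2 h2]; exact h2) h1
        · simp [h1, h2]
  rw [hjoint, hmarg]
end

section
/- Perfect recall plus strategy-independent beliefs forces knowledge of influencing actions (contrapositive construction): in a finite Dec-POMDP with perfect recall, suppose for some agent-timestep (i₁,h₁) and a later agent-timestep (i₂,h₂) the action a_{i₁,h₁} is not measurable with respect to τ_{i₂,h₂} under some strategy profile; i.e., there exist a profile g, a common information realization c_{h₂} with P(c_{h₂}|g) > 0, and two distinct actions a ≠ a' with P(a_{i₁,h₁} = a | c_{h₂}, g) > 0 and P(a_{i₁,h₁} = a' | c_{h₂}, g) > 0. Then the problem does not have strategy-independent common-information-based beliefs: replacing agent (i₁,h₁)'s rule by the constant rule always playing a' yields a profile g' under which c_{h₂} still has positive probability but P(s_{h₂}, p_{h₂} | c_{h₂}, g') ≠ P(s_{h₂}, p_{h₂} | c_{h₂}, g) for some (s_{h₂}, p_{h₂}).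 -/
/-- Trajectory generated by primitive randomness ω when the distinguished
agent-timestep uses decision rule δ. -/
def traj17 {Ω T Act St Pt Ct : Type*} (τ0 : Ω → T) (F : Ω → Act → St × Pt × Ct)
    (δ : T → Act) (ω : Ω) : St × Pt × Ct :=
  F ω (δ (τ0 ω))

/-- Joint probability of (state, private information, common information) under rule δ. -/
noncomputable def joint17 {Ω T Act St Pt Ct : Type*} [Fintype Ω]
    [DecidableEq St] [DecidableEq Pt] [DecidableEq Ct]
    (μ : Ω → ℝ) (τ0 : Ω → T) (F : Ω → Act → St × Pt × Ct) (δ : T → Act)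
    (s : St) (p : Pt) (c : Ct) : ℝ :=
  ∑ ω, if traj17 τ0 F δ ω = (s, p, c) then μ ω else 0

/-- Marginal probability of the common information under rule δ. -/
noncomputable def marg17 {Ω T Act St Pt Ct : Type*} [Fintype Ω] [DecidableEq Ct]
    (μ : Ω → ℝ) (τ0 : Ω → T) (F : Ω → Act → St × Pt × Ct) (δ : T → Act)
    (c : Ct) : ℝ :=
  ∑ ω, if (traj17 τ0 F δ ω).2.2 = c then μ ω else 0

/-- Perfect recall plus strategy-independent beliefs forces knowledge of influencing
actions (contrapositive construction): with perfect recall (the replaced action is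
recoverable from the private-plus-common information via recA), if under the profile
g some common information c is reachable and the replaced action takes two distinct
values a ≠ a' each with positive conditional probability given c, then replacing the
rule by the constant rule a' keeps c reachable yet changes the conditional law of
(state, private information) given c, so the beliefs are not strategy independent. -/
theorem stmt17 {Ω T Act St Pt Ct : Type*} [Fintype Ω] [DecidableEq Act]
    [DecidableEq St] [DecidableEq Pt] [DecidableEq Ct]
    (μ : Ω → ℝ) (hμ0 : ∀ ω, 0 ≤ μ ω) (hμ1 : ∑ ω, μ ω = 1)
    (τ0 : Ω → T) (F : Ω → Act → St × Pt × Ct)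
    (recA : Pt → Ct → Act)
    (hrec : ∀ ω a, recA (F ω a).2.1 (F ω a).2.2 = a)
    (g : T → Act) (c : Ct) (a a' : Act) (haa' : a ≠ a')
    (hc : 0 < marg17 μ τ0 F g c)
    (hma : 0 < (∑ ω, if g (τ0 ω) = a ∧ (traj17 τ0 F g ω).2.2 = c then μ ω else 0) /
        marg17 μ τ0 F g c)
    (hma' : 0 < (∑ ω, if g (τ0 ω) = a' ∧ (traj17 τ0 F g ω).2.2 = c then μ ω else 0) /
        marg17 μ τ0 F g c) :
    0 < marg17 μ τ0 F (fun _ => a') c ∧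
    ∃ (s : St) (p : Pt),
      joint17 μ τ0 F g s p c / marg17 μ τ0 F g c ≠
        joint17 μ τ0 F (fun _ => a') s p c / marg17 μ τ0 F (fun _ => a') c := by
    classical
  -- extract positive-measure witnesses
  have hNa : 0 < ∑ ω, if g (τ0 ω) = a ∧ (traj17 τ0 F g ω).2.2 = c then μ ω else 0 := by
    have := mul_pos hma hc
    rwa [div_mul_cancel₀ _ (ne_of_gt hc)] at this
  have hNa' : 0 < ∑ ω, if g (τ0 ω) = a' ∧ (traj17 τ0 F g ω).2.2 = c then μ ω else 0 := by
    have := mul_pos hma' hc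
    rwa [div_mul_cancel₀ _ (ne_of_gt hc)] at this
  have hex : ∀ (b : Act),
      (0 < ∑ ω, if g (τ0 ω) = b ∧ (traj17 τ0 F g ω).2.2 = c then μ ω else 0) →
      ∃ ω, g (τ0 ω) = b ∧ (traj17 τ0 F g ω).2.2 = c ∧ 0 < μ ω := by
    intro b hb
    by_contra h
    push_neg at h
    have : (∑ ω, if g (τ0 ω) = b ∧ (traj17 τ0 F g ω).2.2 = c then μ ω else 0) ≤ 0 := by
      apply Finset.sum_nonpos
      intro ω _
      split_ifs with hω
      · exact h ω hω.1 hω.2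
      · exact le_refl 0
    exact absurd hb (not_lt.mpr this)
  obtain ⟨ω₀, hω₀a, hω₀c, hω₀μ⟩ := hex a hNa
  obtain ⟨ω₁, hω₁a, hω₁c, hω₁μ⟩ := hex a' hNa'
  have htraj₀ : traj17 τ0 F g ω₀ = F ω₀ a := by
    simp [traj17, hω₀a]
  have htraj₁ : traj17 τ0 F (fun _ => a') ω₁ = traj17 τ0 F g ω₁ := by
    simp [traj17, hω₁a]
  -- c reachable under the constant rule
  have hmarg' : 0 < marg17 μ τ0 F (fun _ => a') c := by
    apply Finset.sum_pos'
    · intro ω _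
      split_ifs
      · exact hμ0 ω
      · exact le_refl 0
    · refine ⟨ω₁, Finset.mem_univ _, ?_⟩
      rw [htraj₁]
      simpa [hω₁c] using hω₁μ
  refine ⟨hmarg', ?_⟩
  -- the distinguishing point
  set s := (F ω₀ a).1
  set p := (F ω₀ a).2.1
  have hcc : (F ω₀ a).2.2 = c := by rw [← htraj₀]; exact hω₀c
  have hFω₀ : F ω₀ a = (s, p, c) := by
    rw [← hcc]
  refine ⟨s, p, ?_⟩
  have hjg : 0 < joint17 μ τ0 F g s p c := by
    apply Finset.sum_pos'
    · intro ω _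
      split_ifs
      · exact hμ0 ω
      · exact le_refl 0
    · refine ⟨ω₀, Finset.mem_univ _, ?_⟩
      rw [htraj₀, hFω₀]
      simpa using hω₀μ
  have hrecp : recA p c = a := by
    have := hrec ω₀ a
    rw [hFω₀] at this
    exact this
  have hjg' : joint17 μ τ0 F (fun _ => a') s p c = 0 := by
    apply Finset.sum_eq_zero
    intro ω _
    have : traj17 τ0 F (fun _ => a') ω ≠ (s, p, c) := by
      intro h
      have h2 := hrec ω a'
      rw [show traj17 τ0 F (fun _ => a') ω = F ω a' from rfl] at h
      rw [h] at h2
      simp only [] at h2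
      exact haa' (hrecp.symm.trans h2)
    simp [this]
  rw [hjg', zero_div]
  exact (div_pos hjg hc).ne'
end
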